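/- Let M be an even delta-matroid in which every component has size at most two. Then the basis graph BG(M) is isomorphic to the hypercube graph Q_d, where d is the number of 2-element components of M. -/

import Mathlib

open scoped symmDiff

/-- A delta-matroid: a finite ground set `E` and a nonempty family `B` of subsets of `E`
satisfying the symmetric exchange axiom. -/
structure DeltaMatroid (α : Type*) [DecidableEq α] where
  E : Finset α
  B : Finset (Finset α)
  nonempty : B.Nonempty
  subset_ground : ∀ S ∈ B, S ⊆ E
  exchange : ∀ B₁ ∈ B, ∀ B₂ ∈ B, ∀ e ∈ B₁ ∆ B₂,
    ∃ f ∈ B₁ ∆ B₂, B₁ ∆ ({e, f} : Finset α) ∈ B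

variable {α : Type*} [DecidableEq α]

/-- A delta-matroid is even if all bases have cardinalities of the same parity. -/
def DeltaMatroid.IsEven (M : DeltaMatroid α) : Prop :=
  ∀ B₁ ∈ M.B, ∀ B₂ ∈ M.B, B₁.card % 2 = B₂.card % 2

/-- `X` is a separator of `M` if `M` is the direct sum of its restrictions to `X`
and to `E \ X`; equivalently, bases can be freely recombined across `X`. -/
def DeltaMatroid.IsSeparator (M : DeltaMatroid α) (X : Finset α) : Prop :=
  X ⊆ M.E ∧ ∀ B₁ ∈ M.B, ∀ B₂ ∈ M.B, (B₁ ∩ X) ∪ (B₂ \ X) ∈ M.B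

/-- A component is a minimal nonempty separator. -/
def DeltaMatroid.IsComponent (M : DeltaMatroid α) (C : Finset α) : Prop :=
  M.IsSeparator C ∧ C.Nonempty ∧
    ∀ X, M.IsSeparator X → X.Nonempty → X ⊆ C → X = C

/-- The basis graph of a delta-matroid: vertices are the bases, two bases being
adjacent iff their symmetric difference has exactly two elements. -/
def DeltaMatroid.BG (M : DeltaMatroid α) : SimpleGraph ↥M.B where
  Adj S T := ((S : Finset α) ∆ (T : Finset α)).card = 2
  symm := by
    constructor
    intro S T h
    rwa [symmDiff_comm]
  loopless := by
    constructor
    intro S h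
    simp [symmDiff_self] at h

/-- The graph `G` has a cycle of length `k` through the edge `e`. -/
def CycleThroughEdge {V : Type*} (G : SimpleGraph V) (e : Sym2 V) (k : ℕ) : Prop :=
  ∃ (v : V) (c : G.Walk v v), c.IsCycle ∧ c.length = k ∧ e ∈ c.edges

/-- An edge is pancyclic if it lies in a cycle of every length `3 ≤ k ≤ n`. -/
def EdgePancyclic {V : Type*} [Fintype V] (G : SimpleGraph V) (e : Sym2 V) : Prop :=
  ∀ k, 3 ≤ k → k ≤ Fintype.card V → CycleThroughEdge G e k

/-- An edge is almost pancyclic if it lies in a cycle of every length `4 ≤ k ≤ n`. -/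
def EdgeAlmostPancyclic {V : Type*} [Fintype V] (G : SimpleGraph V) (e : Sym2 V) : Prop :=
  ∀ k, 4 ≤ k → k ≤ Fintype.card V → CycleThroughEdge G e k

/-- An edge is even pancyclic if it lies in a cycle of length `k` for every
`3 ≤ k ≤ n` with `k` even or `k = n`. -/
def EdgeEvenPancyclic {V : Type*} [Fintype V] (G : SimpleGraph V) (e : Sym2 V) : Prop :=
  ∀ k, 3 ≤ k → k ≤ Fintype.card V → (Even k ∨ k = Fintype.card V) →
    CycleThroughEdge G e k

/-- The hypercube graph `Q_d`: vertices `{0,1}^d`, adjacent iff they differ in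
exactly one coordinate. -/
def hypercube (d : ℕ) : SimpleGraph (Fin d → Bool) where
  Adj x y := ∃ i, x i ≠ y i ∧ ∀ j, j ≠ i → x j = y j
  symm := by
    constructor
    rintro x y ⟨i, h, hj⟩
    exact ⟨i, h.symm, fun j hne => (hj j hne).symm⟩
  loopless := by
    constructor
    rintro x ⟨i, h, -⟩
    exact h rfl

/-! An element lying in exactly one of two bases lies in a component `C`, and since all bases
have the same parity on a separator, the two bases differ in an even number of elements of `C`;
so `|C| = 2` and the bases differ on all of `C`. Hence every symmetric difference of bases is a
disjoint union of 2-element components, and conversely flipping any 2-element component of a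
base gives a base (otherwise all bases agree on each point of `C`, which then splits as a
separator). Fixing a base `B₀`, recording which 2-element components `B ∆ B₀` contains is
therefore a bijection onto `{0,1}^d` under which `|B ∆ B'| = 2` means one coordinate changes. -/

theorem Finset.card_symmDiff_add_two_mul_card_inter {β : Type*} [DecidableEq β]
    (s t : Finset β) : (s ∆ t).card + 2 * (s ∩ t).card = s.card + t.card := by
  rw [symmDiff_eq_sup_sdiff_inf, Finset.sup_eq_union, Finset.inf_eq_inter,
    Finset.card_sdiff_of_subset Finset.inter_subset_union,
    ← Finset.card_union_add_card_inter s t]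
  have := Finset.card_le_card (Finset.inter_subset_union (s := s) (t := t))
  omega

theorem hypercube_adj_iff {d : ℕ} {x y : Fin d → Bool} :
    (hypercube d).Adj x y ↔ (Finset.univ.filter fun i => x i ≠ y i).card = 1 := by
  simp only [Finset.card_eq_one, Finset.eq_singleton_iff_unique_mem, Finset.mem_filter,
    Finset.mem_univ, true_and]
  constructor
  · rintro ⟨i, hi, hj⟩
    exact ⟨i, hi, fun j hne => by_contra fun hji => hne (hj j hji)⟩
  · rintro ⟨i, hi, hj⟩
    exact ⟨i, hi, fun j hji => by_contra fun hne => hji (hj j hne)⟩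

namespace DeltaMatroid

variable {M : DeltaMatroid α} {X Y C B B₁ B₂ : Finset α} {e : α}

theorem isSeparator_ground (M : DeltaMatroid α) : M.IsSeparator M.E := by
  refine ⟨subset_rfl, fun B₁ h₁ B₂ h₂ => ?_⟩
  rw [Finset.inter_eq_left.mpr (M.subset_ground _ h₁),
    Finset.sdiff_eq_empty_iff_subset.mpr (M.subset_ground _ h₂), Finset.union_empty]
  exact h₁

theorem IsSeparator.inter (hX : M.IsSeparator X) (hY : M.IsSeparator Y) :
    M.IsSeparator (X ∩ Y) := by
  refine ⟨Finset.inter_subset_left.trans hX.1, fun B₁ h₁ B₂ h₂ => ?_⟩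
  convert hY.2 _ (hX.2 B₁ h₁ B₂ h₂) B₂ h₂ using 1
  ext a
  simp only [Finset.mem_union, Finset.mem_inter, Finset.mem_sdiff]
  tauto

theorem IsSeparator.ground_sdiff (hX : M.IsSeparator X) : M.IsSeparator (M.E \ X) := by
  refine ⟨Finset.sdiff_subset, fun B₁ h₁ B₂ h₂ => ?_⟩
  convert hX.2 B₂ h₂ B₁ h₁ using 1
  ext a
  have := @M.subset_ground B₁ h₁ a
  have := @M.subset_ground B₂ h₂ a
  simp only [Finset.mem_union, Finset.mem_inter, Finset.mem_sdiff]
  tauto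

theorem IsSeparator.sdiff (hX : M.IsSeparator X) (hY : M.IsSeparator Y) :
    M.IsSeparator (X \ Y) := by
  convert hX.inter hY.ground_sdiff using 1
  rw [← Finset.inter_sdiff_assoc, Finset.inter_eq_left.mpr hX.1]

theorem isSeparator_singleton_of_mem_imp_mem (he : e ∈ M.E)
    (h : ∀ B₁ ∈ M.B, ∀ B₂ ∈ M.B, e ∈ B₁ → e ∈ B₂) : M.IsSeparator {e} := by
  refine ⟨Finset.singleton_subset_iff.mpr he, fun B₁ h₁ B₂ h₂ => ?_⟩
  convert h₂ using 1
  ext a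
  have := h B₁ h₁ B₂ h₂
  have := h B₂ h₂ B₁ h₁
  simp only [Finset.mem_union, Finset.mem_inter, Finset.mem_sdiff, Finset.mem_singleton]
  by_cases hae : a = e
  · subst hae; tauto
  · simp [hae]

theorem exists_isComponent_mem (he : e ∈ M.E) : ∃ C, M.IsComponent C ∧ e ∈ C := by
  classical
  let S := M.E.powerset.filter fun X => M.IsSeparator X ∧ e ∈ X
  have hES : M.E ∈ S := by simpa [S] using ⟨M.isSeparator_ground, he⟩
  obtain ⟨C, hCS, hmin⟩ := Finset.exists_min_image S Finset.card ⟨_, hES⟩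
  simp only [S, Finset.mem_filter, Finset.mem_powerset] at hCS hmin
  obtain ⟨hCE, hC, heC⟩ : C ⊆ M.E ∧ M.IsSeparator C ∧ e ∈ C := hCS
  refine ⟨C, ⟨hC, ⟨e, heC⟩, fun X hX hXne hXC => ?_⟩, heC⟩
  by_cases heX : e ∈ X
  · exact Finset.eq_of_subset_of_card_le hXC (hmin X ⟨hXC.trans hCE, hX, heX⟩)
  · -- otherwise `C \ X` is a smaller separator containing `e`
    have := hmin (C \ X)
      ⟨Finset.sdiff_subset.trans hCE, hC.sdiff hX, Finset.mem_sdiff.mpr ⟨heC, heX⟩⟩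
    have := Finset.card_lt_card (Finset.sdiff_ssubset hXC hXne)
    omega

theorem IsComponent.eq_or_disjoint {D : Finset α} (hC : M.IsComponent C)
    (hD : M.IsComponent D) : C = D ∨ Disjoint C D := by
  rcases (C ∩ D).eq_empty_or_nonempty with h | h
  · exact Or.inr (Finset.disjoint_iff_inter_eq_empty.mpr h)
  · have hCD := IsSeparator.inter hC.1 hD.1
    exact Or.inl ((hC.2.2 _ hCD h Finset.inter_subset_left).symm.trans
      (hD.2.2 _ hCD h Finset.inter_subset_right))

theorem IsEven.card_inter_mod_two_eq (hM : M.IsEven) (hX : M.IsSeparator X) (h₁ : B₁ ∈ M.B)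
    (h₂ : B₂ ∈ M.B) : (B₁ ∩ X).card % 2 = (B₂ ∩ X).card % 2 := by
  have hdisj : Disjoint (B₁ ∩ X) (B₂ \ X) :=
    Finset.disjoint_left.mpr fun _ ha hb => (Finset.mem_sdiff.mp hb).2 (Finset.mem_inter.mp ha).2
  have := hM _ (hX.2 B₁ h₁ B₂ h₂) _ h₂
  rw [Finset.card_union_of_disjoint hdisj, ← Finset.card_inter_add_card_sdiff B₂ X] at this
  omega

theorem IsEven.even_card_symmDiff_inter (hM : M.IsEven) (hX : M.IsSeparator X)
    (h₁ : B₁ ∈ M.B) (h₂ : B₂ ∈ M.B) : Even ((B₁ ∆ B₂) ∩ X).card := by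
  have hdistrib : (B₁ ∆ B₂) ∩ X = (B₁ ∩ X) ∆ (B₂ ∩ X) := inf_symmDiff_distrib_right _ _ _
  have := Finset.card_symmDiff_add_two_mul_card_inter (B₁ ∩ X) (B₂ ∩ X)
  have := hM.card_inter_mod_two_eq hX h₁ h₂
  rw [hdistrib, Nat.even_iff]
  omega

theorem IsEven.subset_or_disjoint_symmDiff (hM : M.IsEven) (hX : M.IsSeparator X)
    (hX2 : X.card = 2) (h₁ : B₁ ∈ M.B) (h₂ : B₂ ∈ M.B) :
    X ⊆ B₁ ∆ B₂ ∨ Disjoint X (B₁ ∆ B₂) := by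
  have heven := Nat.even_iff.mp (hM.even_card_symmDiff_inter hX h₁ h₂)
  have hle := Finset.card_le_card (Finset.inter_subset_right (s₁ := B₁ ∆ B₂) (s₂ := X))
  rcases (show ((B₁ ∆ B₂) ∩ X).card = 0 ∨ ((B₁ ∆ B₂) ∩ X).card = 2 by omega) with h0 | h2
  · exact Or.inr (Finset.disjoint_iff_inter_eq_empty.mpr
      (by rw [Finset.inter_comm]; exact Finset.card_eq_zero.mp h0))
  · exact Or.inl (Finset.inter_eq_right.mp
      (Finset.eq_of_subset_of_card_le Finset.inter_subset_right (by omega)))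

theorem IsEven.subset_symmDiff_iff_mem (hM : M.IsEven) (hX : M.IsSeparator X)
    (hX2 : X.card = 2) (h₁ : B₁ ∈ M.B) (h₂ : B₂ ∈ M.B) (he : e ∈ X) :
    X ⊆ B₁ ∆ B₂ ↔ e ∈ B₁ ∆ B₂ :=
  ⟨fun h => h he, fun h => (hM.subset_or_disjoint_symmDiff hX hX2 h₁ h₂).resolve_right
    fun hdisj => Finset.disjoint_left.mp hdisj he h⟩

theorem IsEven.not_subset_symmDiff_iff (hM : M.IsEven) (hX : M.IsSeparator X)
    (hX2 : X.card = 2) {B₀ : Finset α} (h₀ : B₀ ∈ M.B) (h₁ : B₁ ∈ M.B) (h₂ : B₂ ∈ M.B) :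
    ¬ X ⊆ B₁ ∆ B₂ ↔ (X ⊆ B₁ ∆ B₀ ↔ X ⊆ B₂ ∆ B₀) := by
  obtain ⟨e, he⟩ := Finset.card_pos.mp (by omega : 0 < X.card)
  rw [hM.subset_symmDiff_iff_mem hX hX2 h₁ h₂ he, hM.subset_symmDiff_iff_mem hX hX2 h₁ h₀ he,
    hM.subset_symmDiff_iff_mem hX hX2 h₂ h₀ he]
  simp only [Finset.mem_symmDiff]
  tauto

theorem IsEven.symmDiff_mem_of_isComponent (hM : M.IsEven) (hC : M.IsComponent C)
    (hC2 : C.card = 2) (hB : B ∈ M.B) : B ∆ C ∈ M.B := by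
  by_cases h : ∃ B' ∈ M.B, C ⊆ B ∆ B'
  · obtain ⟨B', hB', hCB'⟩ := h
    convert hC.1.2 B' hB' B hB using 1
    ext a
    have := @hCB' a
    simp only [Finset.mem_symmDiff, Finset.mem_union, Finset.mem_inter, Finset.mem_sdiff] at this ⊢
    tauto
  · -- all bases then agree at a point `e` of `C`, so `{e}` is a separator strictly inside `C`
    push Not at h
    obtain ⟨e, heC⟩ := hC.2.1
    have hagree : ∀ B' ∈ M.B, e ∉ B ∆ B' := fun B' hB' =>
      mt (hM.subset_symmDiff_iff_mem hC.1 hC2 hB hB' heC).mpr (h B' hB')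
    have hsep : M.IsSeparator {e} := isSeparator_singleton_of_mem_imp_mem (hC.1.1 heC)
      fun B₁ h₁ B₂ h₂ => by
        have := hagree B₁ h₁
        have := hagree B₂ h₂
        simp only [Finset.mem_symmDiff] at *
        tauto
    have := hC.2.2 {e} hsep (Finset.singleton_nonempty e) (Finset.singleton_subset_iff.mpr heC)
    rw [← this, Finset.card_singleton] at hC2
    exact absurd hC2 (by norm_num)

theorem IsEven.exists_isComponent_subset_symmDiff (hM : M.IsEven)
    (hsmall : ∀ C, M.IsComponent C → C.card ≤ 2) (h₁ : B₁ ∈ M.B) (h₂ : B₂ ∈ M.B)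
    (he : e ∈ B₁ ∆ B₂) : ∃ C, M.IsComponent C ∧ C.card = 2 ∧ e ∈ C ∧ C ⊆ B₁ ∆ B₂ := by
  have heE : e ∈ M.E := by
    rcases Finset.mem_symmDiff.mp he with ⟨h, -⟩ | ⟨h, -⟩
    exacts [M.subset_ground _ h₁ h, M.subset_ground _ h₂ h]
  obtain ⟨C, hC, heC⟩ := exists_isComponent_mem heE
  have heven := Nat.even_iff.mp (hM.even_card_symmDiff_inter hC.1 h₁ h₂)
  have hpos := Finset.card_pos.mpr ⟨e, Finset.mem_inter.mpr ⟨he, heC⟩⟩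
  have hle := Finset.card_le_card (Finset.inter_subset_right (s₁ := B₁ ∆ B₂) (s₂ := C))
  have hC2 := hsmall C hC
  have hinter : (B₁ ∆ B₂) ∩ C = C :=
    Finset.eq_of_subset_of_card_le Finset.inter_subset_right (by omega)
  exact ⟨C, hC, by rw [← hinter]; omega, heC, Finset.inter_eq_right.mp hinter⟩

def twoComponents (M : DeltaMatroid α) : Set (Finset α) := {C | M.IsComponent C ∧ C.card = 2}

theorem twoComponents_finite (M : DeltaMatroid α) : M.twoComponents.Finite :=
  M.E.powerset.finite_toSet.subset fun _ hC => Finset.mem_powerset.mpr hC.1.1.1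

section Enumeration

variable {ι : Type*} (c : ι ≃ M.twoComponents)

theorem pairwiseDisjoint_twoComponents (s : Set ι) :
    s.PairwiseDisjoint fun i => (c i : Finset α) := fun i _ j _ hij =>
  ((c i).2.1.eq_or_disjoint (c j).2.1).resolve_left fun h => hij (c.injective (Subtype.ext h))

theorem coe_subset_biUnion_twoComponents_iff (J : Finset ι) (i : ι) :
    (c i : Finset α) ⊆ J.biUnion (fun j => c j) ↔ i ∈ J := by
  refine ⟨fun h => ?_, fun hi => Finset.subset_biUnion_of_mem (fun j => (c j : Finset α)) hi⟩
  obtain ⟨e, he⟩ := Finset.card_pos.mp (by rw [(c i).2.2]; norm_num : 0 < (c i : Finset α).card)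
  obtain ⟨j, hj, hej⟩ := Finset.mem_biUnion.mp (h he)
  by_contra hi
  have hij : i ≠ j := fun h => hi (h ▸ hj)
  exact Finset.disjoint_left.mp (pairwiseDisjoint_twoComponents c Set.univ trivial trivial hij)
    he hej

theorem IsEven.symmDiff_biUnion_twoComponents_mem (hM : M.IsEven) (hB : B ∈ M.B)
    (J : Finset ι) : B ∆ J.biUnion (fun j => c j) ∈ M.B := by
  classical
  induction J using Finset.induction_on with
  | empty => rwa [Finset.biUnion_empty, ← Finset.bot_eq_empty, symmDiff_bot]
  | insert i J hiJ ih =>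
    have hdisj : Disjoint (c i : Finset α) (J.biUnion fun j => c j) :=
      (Finset.disjoint_biUnion_right _ _ _).mpr fun j hj =>
        pairwiseDisjoint_twoComponents c Set.univ trivial trivial fun h => hiJ (h ▸ hj)
    rw [Finset.biUnion_insert, ← Finset.sup_eq_union, ← hdisj.symmDiff_eq_sup,
      ← symmDiff_assoc, symmDiff_right_comm]
    exact hM.symmDiff_mem_of_isComponent (c i).2.1 (c i).2.2 ih

variable [Fintype ι]

theorem IsEven.symmDiff_eq_biUnion_twoComponents (hM : M.IsEven)
    (hsmall : ∀ C, M.IsComponent C → C.card ≤ 2) (h₁ : B₁ ∈ M.B) (h₂ : B₂ ∈ M.B) :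
    B₁ ∆ B₂ = (Finset.univ.filter fun i => (c i : Finset α) ⊆ B₁ ∆ B₂).biUnion
      fun i => c i := by
  refine subset_antisymm (fun e he => ?_) (by simp)
  obtain ⟨C, hC, hC2, heC, hCsub⟩ := hM.exists_isComponent_subset_symmDiff hsmall h₁ h₂ he
  obtain ⟨i, hi⟩ := c.surjective ⟨C, hC, hC2⟩
  exact Finset.mem_biUnion.mpr ⟨i, by simpa [hi] using hCsub, by simpa [hi] using heC⟩

theorem IsEven.card_symmDiff_eq_two_mul (hM : M.IsEven)
    (hsmall : ∀ C, M.IsComponent C → C.card ≤ 2) (h₁ : B₁ ∈ M.B) (h₂ : B₂ ∈ M.B) :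
    (B₁ ∆ B₂).card = 2 * (Finset.univ.filter fun i => (c i : Finset α) ⊆ B₁ ∆ B₂).card := by
  conv_lhs => rw [hM.symmDiff_eq_biUnion_twoComponents c hsmall h₁ h₂]
  rw [Finset.card_biUnion (pairwiseDisjoint_twoComponents c _), Finset.sum_const_nat
    fun i _ => (c i).2.2, mul_comm]

end Enumeration

theorem IsEven.nonempty_basisGraph_iso_hypercube (hM : M.IsEven)
    (hsmall : ∀ C, M.IsComponent C → C.card ≤ 2) {d : ℕ} (c : Fin d ≃ M.twoComponents) :
    Nonempty (M.BG ≃g hypercube d) := by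
  obtain ⟨B₀, h₀⟩ := M.nonempty
  let f : M.B → Fin d → Bool := fun S i => decide ((c i : Finset α) ⊆ S ∆ B₀)
  have hcard : ∀ S T : M.B,
      ((S : Finset α) ∆ T).card = 2 * (Finset.univ.filter fun i => f S i ≠ f T i).card := by
    intro S T
    rw [hM.card_symmDiff_eq_two_mul c hsmall S.2 T.2]
    congr 2
    ext i
    simp only [Finset.mem_filter, Finset.mem_univ, true_and, f, ne_eq, decide_eq_decide,
      ← hM.not_subset_symmDiff_iff (c i).2.1.1 (c i).2.2 h₀ S.2 T.2, not_not]
  have hinj : Function.Injective f := fun S T h =>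
    Subtype.ext (symmDiff_eq_bot.mp (Finset.card_eq_zero.mp (by simp [hcard, h])))
  have hsurj : Function.Surjective f := fun s => by
    let J := Finset.univ.filter fun i => s i
    refine ⟨⟨B₀ ∆ J.biUnion (fun j => c j), hM.symmDiff_biUnion_twoComponents_mem c h₀ J⟩,
      funext fun i => ?_⟩
    simp [f, J, coe_subset_biUnion_twoComponents_iff]
  refine ⟨⟨Equiv.ofBijective f ⟨hinj, hsurj⟩, fun {S T} => ?_⟩⟩
  change (hypercube d).Adj (f S) (f T) ↔ ((S : Finset α) ∆ T).card = 2
  rw [hypercube_adj_iff, hcard]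
  omega

end DeltaMatroid

/-- If every component of an even delta-matroid `M` has size at most two, then
`BG(M)` is isomorphic to the hypercube `Q_d`, `d` the number of 2-element
components of `M`. -/
theorem statement10 (M : DeltaMatroid α) (hM : M.IsEven)
    (hsmall : ∀ C, M.IsComponent C → C.card ≤ 2) (d : ℕ)
    (hd : {C : Finset α | M.IsComponent C ∧ C.card = 2}.ncard = d) :
    Nonempty (M.BG ≃g hypercube d) := by
  have := M.twoComponents_finite.to_subtype
  have hcard : Nat.card M.twoComponents = d := hd
  exact hM.nonempty_basisGraph_iso_hypercube hsmall (Finite.equivFinOfCardEq hcard).symm
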